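/- Let Γ be a finite simple graph of order n and let k be an integer. If S is a global defensive k-alliance in Γ, then |S|² − k·|S| − n ≥ 0 (equivalently, |S|² ≥ k·|S| + n). -/

import Mathlib

/-- Number of neighbors that `v` has in `S`. -/
noncomputable def SimpleGraph.nbrCount {V : Type*} (G : SimpleGraph V) (S : Set V) (v : V) : ℕ :=
  (S ∩ {u | G.Adj v u}).ncard

/-- Degree of a vertex, counted via `ncard`. -/
noncomputable def SimpleGraph.degN {V : Type*} (G : SimpleGraph V) (v : V) : ℕ :=
  {u | G.Adj v u}.ncard

/-- `S` is a defensive `k`-alliance. -/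
def SimpleGraph.IsDefensiveAlliance {V : Type*} (G : SimpleGraph V) (k : ℤ) (S : Set V) : Prop :=
  S.Nonempty ∧ ∀ v ∈ S, (G.nbrCount Sᶜ v : ℤ) + k ≤ (G.nbrCount S v : ℤ)

/-- `S` is a dominating set. -/
def SimpleGraph.IsDominating {V : Type*} (G : SimpleGraph V) (S : Set V) : Prop :=
  ∀ v ∈ Sᶜ, ∃ u ∈ S, G.Adj v u

/-- `S` is a global defensive `k`-alliance. -/
def SimpleGraph.IsGlobalDefensiveAlliance {V : Type*} (G : SimpleGraph V) (k : ℤ) (S : Set V) : Prop :=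
  G.IsDefensiveAlliance k S ∧ G.IsDominating S

/-- Global defensive `k`-alliance number. -/
noncomputable def SimpleGraph.globalDefensiveAllianceNumber {V : Type*} (G : SimpleGraph V) (k : ℤ) : ℕ :=
  sInf {m | ∃ S : Set V, G.IsGlobalDefensiveAlliance k S ∧ S.ncard = m}

/-! Count the edges between `S` and its complement from both sides. Domination gives every vertex
outside `S` at least one such edge, so there are at least `n - |S|` of them; the alliance condition
gives every vertex of `S` at most `δ_S(v) - k ≤ |S| - 1 - k` of them. Hence
`n - |S| ≤ |S| (|S| - 1 - k)`. -/

open Finset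

namespace SimpleGraph

variable {V : Type*} (G : SimpleGraph V)

theorem nbrCount_coe_finset [DecidableRel G.Adj] (s : Finset V) (v : V) :
    G.nbrCount s v = #{u ∈ s | G.Adj v u} := by
  rw [nbrCount, ← Set.ncard_coe_finset]
  congr 1
  ext u
  simp

theorem sum_nbrCount_comm (s t : Finset V) :
    ∑ v ∈ s, G.nbrCount t v = ∑ u ∈ t, G.nbrCount s u := by
  classical
  simp only [nbrCount_coe_finset, card_filter]
  rw [sum_comm]
  simp only [G.adj_comm]

theorem nbrCount_lt_card {s : Finset V} {v : V} (hv : v ∈ s) : G.nbrCount s v < #s := by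
  classical
  rw [nbrCount_coe_finset]
  refine card_lt_card ⟨filter_subset _ _, fun h => ?_⟩
  exact G.loopless.irrefl v (mem_filter.mp (h hv)).2

theorem IsDominating.card_compl_le_sum_nbrCount [Fintype V] [DecidableEq V] {s : Finset V}
    (hs : G.IsDominating s) : #sᶜ ≤ ∑ v ∈ sᶜ, G.nbrCount s v := by
  classical
  rw [card_eq_sum_ones]
  refine sum_le_sum fun v hv => ?_
  obtain ⟨u, hu, huv⟩ := hs v (by simpa using hv)
  rw [nbrCount_coe_finset, Nat.one_le_iff_ne_zero, Ne, card_eq_zero, filter_eq_empty_iff]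
  exact fun h => h hu huv

theorem IsDefensiveAlliance.sum_nbrCount_compl_le {k : ℤ} {s : Finset V}
    (hs : G.IsDefensiveAlliance k s) :
    ∑ v ∈ s, (G.nbrCount (s : Set V)ᶜ v : ℤ) ≤ #s * (#s - 1 - k) := by
  rw [← nsmul_eq_mul, ← sum_const]
  refine sum_le_sum fun v hv => ?_
  have hdef := hs.2 v hv
  have hlt := G.nbrCount_lt_card hv
  omega

end SimpleGraph

theorem global_defensive_alliance_quadratic {V : Type*} [Fintype V]
    (G : SimpleGraph V) (k : ℤ) (S : Set V)
    (hS : G.IsGlobalDefensiveAlliance k S) :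
    0 ≤ (S.ncard : ℤ) ^ 2 - k * (S.ncard : ℤ) - (Fintype.card V : ℤ) := by
  classical
  lift S to Finset V using S.toFinite
  obtain ⟨hdef, hdom⟩ := hS
  have hcompl : (#Sᶜ : ℤ) = Fintype.card V - #S := by
    rw [card_compl, Nat.cast_sub (card_le_univ S)]
  have hcount : (#Sᶜ : ℤ) ≤ #S * (#S - 1 - k) :=
    calc (#Sᶜ : ℤ) ≤ ∑ v ∈ Sᶜ, (G.nbrCount S v : ℤ) := mod_cast hdom.card_compl_le_sum_nbrCount
      _ = ∑ v ∈ S, (G.nbrCount (S : Set V)ᶜ v : ℤ) := by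
        rw [← coe_compl]
        exact_mod_cast (G.sum_nbrCount_comm S Sᶜ).symm
      _ ≤ #S * (#S - 1 - k) := hdef.sum_nbrCount_compl_le
  rw [Set.ncard_coe_finset]
  linarith
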